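/- arXiv:solv-int/9704001 — 2 statements merged into one kernel-verified Lean document; each statement's English description precedes it below -/
import Mathlib

section
/- Jacobi determinant identity: let M be an n×n matrix over a commutative ring, n ≥ 2, and for indices i₁ < i₂ (rows) and j₁ < j₂ (columns) let D = det M, let D[i|j] denote the determinant of M with row i and column j removed, and D[i₁,i₂|j₁,j₂] the determinant of M with rows i₁,i₂ and columns j₁,j₂ removed. Then D[i₁|j₁]·D[i₂|j₂] − D[i₁|j₂]·D[i₂|j₁] = D[i₁,i₂|j₁,j₂]·D. -/
open Matrix

/-- The minor of a square matrix obtained by deleting row `i` and column `j`. -/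
def minor1 {R : Type*} [CommRing R] {n : ℕ}
    (M : Matrix (Fin (n + 1)) (Fin (n + 1)) R) (i j : Fin (n + 1)) : R :=
  (M.submatrix i.succAbove j.succAbove).det

/-- The order-preserving injection `Fin n → Fin (n+2)` avoiding both `i₁` and `i₂`
(`i₁ < i₂`), used to delete two rows (or columns). -/
def del2 {n : ℕ} (i₁ i₂ : Fin (n + 2)) (h : i₁ < i₂) : Fin n → Fin (n + 2) :=
  fun k =>
    i₂.succAbove ((⟨i₁.val, by
      have h' : i₁.val < i₂.val := h
      have h'' : i₂.val < n + 2 := i₂.isLt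
      omega⟩ : Fin (n + 1)).succAbove k)

namespace DJaux

variable {R : Type*} [CommRing R]

/-- A permutation fixing everything outside `{a, b}` is `1` or the swap. -/
lemma perm_eq_one_or_swap {ι : Type*} [DecidableEq ι] {σ : Equiv.Perm ι} {a b : ι}
    (hab : a ≠ b) (h : ∀ k, k ≠ a → k ≠ b → σ k = k) :
    σ = 1 ∨ σ = Equiv.swap a b := by
  have key : ∀ x, x = a ∨ x = b → σ x = a ∨ σ x = b := by
    intro x hx
    by_contra hc
    push_neg at hc
    have h1 : σ (σ x) = σ x := h _ hc.1 hc.2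
    have h2 : σ x = x := σ.injective h1
    rcases hx with rfl | rfl
    · exact hc.1 h2
    · exact hc.2 h2
  rcases key a (Or.inl rfl) with ha | ha
  · left
    ext k
    simp only [Equiv.Perm.coe_one, id_eq]
    rcases eq_or_ne k a with rfl | hka
    · exact ha
    rcases eq_or_ne k b with hkb | hkb
    · subst hkb
      rcases key k (Or.inr rfl) with h' | h'
      · exact absurd (σ.injective (h'.trans ha.symm)) hka
      · exact h'
    · exact h k hka hkb
  · right
    ext k
    rcases eq_or_ne k a with rfl | hka
    · rw [ha, Equiv.swap_apply_left]
    rcases eq_or_ne k b with hkb | hkb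
    · subst hkb
      rcases key k (Or.inr rfl) with h' | h'
      · rw [h', Equiv.swap_apply_right]
      · exact absurd (σ.injective (ha.trans h'.symm)) hab
    · rw [h k hka hkb, Equiv.swap_apply_of_ne_of_ne hka hkb]

/-- Determinant of the identity matrix with two columns replaced. -/
lemma det_one_updateColumn_updateColumn {ι : Type*} [DecidableEq ι] [Fintype ι]
    (u v : ι → R) {j₁ j₂ : ι} (hj : j₁ ≠ j₂) :
    (((1 : Matrix ι ι R).updateCol j₁ u).updateCol j₂ v).det
      = u j₁ * v j₂ - u j₂ * v j₁ := by
  set B := ((1 : Matrix ι ι R).updateCol j₁ u).updateCol j₂ v with hB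
  have hBapp : ∀ r s, B r s = if s = j₂ then v r else if s = j₁ then u r else
      (1 : Matrix ι ι R) r s := by
    intro r s
    simp [hB, Matrix.updateCol_apply]
  rw [det_apply]
  rw [Finset.sum_eq_add_of_mem (1 : Equiv.Perm ι) (Equiv.swap j₁ j₂)
    (Finset.mem_univ _) (Finset.mem_univ _)
    (by
      intro hcon
      have := congrFun (congrArg (fun e => e.toFun) hcon) j₁
      simp [Equiv.swap_apply_left] at this
      exact hj this)
    ?_]
  · have h1 : (∏ i, B ((1 : Equiv.Perm ι) i) i) = u j₁ * v j₂ := by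
      rw [Finset.prod_eq_mul_of_mem j₁ j₂ (Finset.mem_univ _) (Finset.mem_univ _) hj
        (by
          intro c _ hc
          rw [hBapp]
          simp [hc.1, hc.2, Matrix.one_apply])]
      rw [hBapp, hBapp]
      simp [hj]
    have h2 : (∏ i, B (Equiv.swap j₁ j₂ i) i) = u j₂ * v j₁ := by
      rw [Finset.prod_eq_mul_of_mem j₁ j₂ (Finset.mem_univ _) (Finset.mem_univ _) hj
        (by
          intro c _ hc
          rw [Equiv.swap_apply_of_ne_of_ne hc.1 hc.2, hBapp]
          simp [hc.1, hc.2, Matrix.one_apply])]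
      rw [Equiv.swap_apply_left, Equiv.swap_apply_right, hBapp, hBapp]
      simp [hj]
    rw [h1, h2, Equiv.Perm.sign_swap hj]
    simp
    ring
  · intro σ _ hσ
    have : ∃ k, σ k ≠ k ∧ k ≠ j₁ ∧ k ≠ j₂ := by
      by_contra hc
      push_neg at hc
      have hfix : ∀ k, k ≠ j₁ → k ≠ j₂ → σ k = k := by
        intro k h1 h2
        by_contra hne
        exact h2 (hc k hne h1)
      have := perm_eq_one_or_swap hj hfix
      rcases this with h | h
      · exact hσ.1 h
      · exact hσ.2 h
    obtain ⟨k, hk, hk1, hk2⟩ := this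
    have hzero : B (σ k) k = 0 := by
      rw [hBapp]
      simp [hk1, hk2, Matrix.one_apply, hk]
    have hprod : (∏ i, B (σ i) i) = 0 := Finset.prod_eq_zero (Finset.mem_univ k) hzero
    rw [hprod]
    simp

/-- Cofactor expansion: determinant after replacing a column by a basis vector. -/
lemma det_updateColumn_single {m : ℕ} (A : Matrix (Fin (m + 1)) (Fin (m + 1)) R)
    (i j : Fin (m + 1)) :
    (A.updateCol j (Pi.single i 1)).det
      = (-1) ^ (i + j : ℕ) * (A.submatrix i.succAbove j.succAbove).det := by
  rw [det_succ_column _ j]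
  rw [Fintype.sum_eq_single i (fun k hk => by
    rw [updateCol_self, Pi.single_eq_of_ne hk]
    ring)]
  rw [updateCol_self, Pi.single_eq_same, mul_one, submatrix_updateCol_succAbove]

lemma updateColumn_comm {ι κ : Type*} [DecidableEq κ] (A : Matrix ι κ R) {j₁ j₂ : κ}
    (h : j₁ ≠ j₂) (u v : ι → R) :
    (A.updateCol j₁ u).updateCol j₂ v = (A.updateCol j₂ v).updateCol j₁ u := by
  ext r s
  simp only [updateCol_apply]
  split_ifs with h1 h2
  · exact absurd (h2.symm.trans h1) h
  · rfl
  · rfl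
  · rfl

lemma submatrix_updateColumn_succAbove_ne {m : ℕ} {ι o : Type*}
    (A : Matrix ι (Fin (m + 1)) R) (v : ι → R)
    (j : Fin (m + 1)) (j' : Fin m) (f : o → ι) :
    (A.updateCol (j.succAbove j') v).submatrix f j.succAbove
      = (A.submatrix f j.succAbove).updateCol j' (fun r => v (f r)) := by
  ext r s
  simp only [submatrix_apply, updateCol_apply, Fin.succAbove_right_inj]

set_option maxHeartbeats 1000000 in
/-- The cancellation-free Desnanot–Jacobi identity. -/
lemma key {n : ℕ} (M : Matrix (Fin (n + 2)) (Fin (n + 2)) R)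
    (i₁ i₂ j₁ j₂ : Fin (n + 2)) (hi : i₁ < i₂) (hj : j₁ < j₂) :
    M.det * (minor1 M i₁ j₁ * minor1 M i₂ j₂ - minor1 M i₁ j₂ * minor1 M i₂ j₁)
      = M.det * ((M.submatrix (del2 i₁ i₂ hi) (del2 j₁ j₂ hj)).det * M.det) := by
  classical
  set d := M.det with hd
  set u : Fin (n + 2) → R := fun k => adjugate M k i₁ with hu
  set v : Fin (n + 2) → R := fun k => adjugate M k i₂ with hv
  set B := ((1 : Matrix (Fin (n + 2)) (Fin (n + 2)) R).updateCol j₁ u).updateCol j₂ v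
    with hBdef
  -- Step A : M * B
  have hMB : M * B = (M.updateCol j₁ (d • (Pi.single i₁ 1 : Fin (n + 2) → R))).updateCol j₂
      (d • (Pi.single i₂ 1 : Fin (n + 2) → R)) := by
    ext r s
    rw [mul_apply]
    rcases eq_or_ne s j₂ with rfl | hs2
    · rw [updateCol_self]
      calc ∑ k, M r k * B k s = ∑ k, M r k * adjugate M k i₂ := by
            simp [hBdef, Matrix.updateCol_self, hv]
        _ = (M * adjugate M) r i₂ := (mul_apply).symm
        _ = (d • (1 : Matrix _ _ R)) r i₂ := by rw [mul_adjugate]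
        _ = (d • (Pi.single i₂ 1 : Fin (n + 2) → R)) r := by
            simp [Matrix.smul_apply, Matrix.one_apply, Pi.single_apply, eq_comm]
    · rcases eq_or_ne s j₁ with rfl | hs1
      · rw [Matrix.updateCol_ne hs2, updateCol_self]
        calc ∑ k, M r k * B k s = ∑ k, M r k * adjugate M k i₁ := by
              simp [hBdef, Matrix.updateCol_apply, hs2, hu]
          _ = (M * adjugate M) r i₁ := (mul_apply).symm
          _ = (d • (1 : Matrix _ _ R)) r i₁ := by rw [mul_adjugate]
          _ = (d • (Pi.single i₁ 1 : Fin (n + 2) → R)) r := by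
              simp [Matrix.smul_apply, Matrix.one_apply, Pi.single_apply, eq_comm]
      · rw [Matrix.updateCol_ne hs2, Matrix.updateCol_ne hs1]
        calc ∑ k, M r k * B k s = ∑ k, M r k * (1 : Matrix _ _ R) k s := by
              simp [hBdef, Matrix.updateCol_apply, hs1, hs2]
          _ = (M * (1 : Matrix (Fin (n + 2)) (Fin (n + 2)) R)) r s := (mul_apply).symm
          _ = M r s := by rw [mul_one]
  -- Step B : det B
  have hdetB : B.det = u j₁ * v j₂ - u j₂ * v j₁ :=
    det_one_updateColumn_updateColumn u v hj.ne
  have hu1 : u j₁ = (-1) ^ (i₁ + j₁ : ℕ) * minor1 M i₁ j₁ := by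
    show M.adjugate j₁ i₁ = _
    rw [adjugate_fin_succ_eq_det_submatrix]
    rfl
  have hu2 : u j₂ = (-1) ^ (i₁ + j₂ : ℕ) * minor1 M i₁ j₂ := by
    show M.adjugate j₂ i₁ = _
    rw [adjugate_fin_succ_eq_det_submatrix]
    rfl
  have hv1 : v j₁ = (-1) ^ (i₂ + j₁ : ℕ) * minor1 M i₂ j₁ := by
    show M.adjugate j₁ i₂ = _
    rw [adjugate_fin_succ_eq_det_submatrix]
    rfl
  have hv2 : v j₂ = (-1) ^ (i₂ + j₂ : ℕ) * minor1 M i₂ j₂ := by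
    show M.adjugate j₂ i₂ = _
    rw [adjugate_fin_succ_eq_det_submatrix]
    rfl
  -- auxiliary indices
  have hj₁v : j₁.val < n + 1 := by
    have := hj
    have := j₂.isLt
    omega
  have hi₁v : i₁.val < n + 1 := by
    have := hi
    have := i₂.isLt
    omega
  set j₁' : Fin (n + 1) := ⟨j₁.val, hj₁v⟩ with hj₁'
  set i₁' : Fin (n + 1) := ⟨i₁.val, hi₁v⟩ with hi₁'
  have hsj : j₂.succAbove j₁' = j₁ := by
    rw [Fin.succAbove_of_castSucc_lt _ _ (by simp only [Fin.lt_def, Fin.coe_castSucc]; exact hj)]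
    exact Fin.ext rfl
  have hsi : i₂.succAbove i₁' = i₁ := by
    rw [Fin.succAbove_of_castSucc_lt _ _ (by simp only [Fin.lt_def, Fin.coe_castSucc]; exact hi)]
    exact Fin.ext rfl
  -- Step C : determinant of the right-hand side of hMB
  have hC : ((M.updateCol j₁ (d • (Pi.single i₁ 1 : Fin (n + 2) → R))).updateCol j₂
      (d • (Pi.single i₂ 1 : Fin (n + 2) → R))).det
      = d * (d * ((-1) ^ (i₂ + j₂ : ℕ) * ((-1) ^ (i₁ + j₁ : ℕ) *
        (M.submatrix (del2 i₁ i₂ hi) (del2 j₁ j₂ hj)).det))) := by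
    rw [det_updateCol_smul]
    rw [updateColumn_comm _ hj.ne]
    rw [det_updateCol_smul]
    rw [updateColumn_comm _ hj.ne.symm]
    congr 1
    congr 1
    rw [det_updateColumn_single]
    congr 1
    conv_lhs => rw [← hsj]
    rw [submatrix_updateColumn_succAbove_ne]
    have hsingle : (fun r : Fin (n + 1) => (Pi.single i₁ 1 : Fin (n + 2) → R) (i₂.succAbove r)) =
        (Pi.single i₁' 1 : Fin (n + 1) → R) := by
      funext r
      rw [← hsi]
      simp [Pi.single_apply, Fin.succAbove_right_inj, eq_comm]
    rw [hsingle, det_updateColumn_single, submatrix_submatrix]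
    have hdel_i : i₂.succAbove ∘ i₁'.succAbove = del2 i₁ i₂ hi := rfl
    have hdel_j : j₂.succAbove ∘ j₁'.succAbove = del2 j₁ j₂ hj := rfl
    rw [hdel_i, hdel_j]
  -- Assemble
  have hE : d * B.det = ((M.updateCol j₁ (d • (Pi.single i₁ 1 : Fin (n + 2) → R))).updateCol j₂
      (d • (Pi.single i₂ 1 : Fin (n + 2) → R))).det := by
    rw [← hMB, det_mul, hd]
  rw [hdetB, hu1, hu2, hv1, hv2, hC] at hE
  set p : R := (-1) ^ (i₁ + j₁ : ℕ) with hp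
  set q : R := (-1) ^ (i₂ + j₂ : ℕ) with hq
  set p' : R := (-1) ^ (i₁ + j₂ : ℕ) with hp'
  set q' : R := (-1) ^ (i₂ + j₁ : ℕ) with hq'
  set a := minor1 M i₁ j₁
  set b := minor1 M i₂ j₂
  set c := minor1 M i₁ j₂
  set e := minor1 M i₂ j₁
  set f := (M.submatrix (del2 i₁ i₂ hi) (del2 j₁ j₂ hj)).det
  have hpq : p * q * (p * q) = 1 := by
    rw [hp, hq, ← pow_add, ← pow_add, ← two_mul, pow_mul, neg_one_sq, one_pow]
  have hrs : p' * q' = p * q := by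
    rw [hp, hq, hp', hq', ← pow_add, ← pow_add]
    congr 1
    omega
  clear_value p q p' q' a b c e f
  have h2 : p * q * (d * (a * b - c * e)) - p * q * (d * (f * d)) = 0 := by
    linear_combination hE + (d * c * e) * hrs
  linear_combination p * q * h2 - (d * (a * b - c * e) - d * (f * d)) * hpq

end DJaux

/-- Desnanot–Jacobi (Dodgson condensation) identity:
`D[i₁|j₁]·D[i₂|j₂] − D[i₁|j₂]·D[i₂|j₁] = D[i₁,i₂|j₁,j₂]·D`. -/
theorem desnanot_jacobi {R : Type*} [CommRing R] {n : ℕ}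
    (M : Matrix (Fin (n + 2)) (Fin (n + 2)) R)
    (i₁ i₂ j₁ j₂ : Fin (n + 2)) (hi : i₁ < i₂) (hj : j₁ < j₂) :
    minor1 M i₁ j₁ * minor1 M i₂ j₂ - minor1 M i₁ j₂ * minor1 M i₂ j₁ =
      (M.submatrix (del2 i₁ i₂ hi) (del2 j₁ j₂ hj)).det * M.det := by
  classical
  set X : Matrix (Fin (n + 2)) (Fin (n + 2)) (MvPolynomial (Fin (n + 2) × Fin (n + 2)) ℤ) :=
    Matrix.of (fun i j => MvPolynomial.X (i, j)) with hXdef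
  have hX : X.det ≠ 0 := by
    intro h
    have h0 := congrArg
      (MvPolynomial.eval (fun p : Fin (n + 2) × Fin (n + 2) => if p.1 = p.2 then (1 : ℤ) else 0)) h
    rw [RingHom.map_det] at h0
    have h1 : (MvPolynomial.eval
        (fun p : Fin (n + 2) × Fin (n + 2) => if p.1 = p.2 then (1 : ℤ) else 0)).mapMatrix X
        = (1 : Matrix (Fin (n + 2)) (Fin (n + 2)) ℤ) := by
      ext i j
      by_cases hij : i = j <;>
        simp [hXdef, RingHom.mapMatrix_apply, Matrix.map_apply, Matrix.one_apply, hij]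
    rw [h1] at h0
    simp at h0
  have hgen := DJaux.key X i₁ i₂ j₁ j₂ hi hj
  have hgen2 : minor1 X i₁ j₁ * minor1 X i₂ j₂ - minor1 X i₁ j₂ * minor1 X i₂ j₁
      = (X.submatrix (del2 i₁ i₂ hi) (del2 j₁ j₂ hj)).det * X.det :=
    mul_left_cancel₀ hX hgen
  set φ : MvPolynomial (Fin (n + 2) × Fin (n + 2)) ℤ →+* R :=
    (MvPolynomial.eval₂Hom (Int.castRingHom R) (fun p => M p.1 p.2)) with hφdef
  have hmapX : φ.mapMatrix X = M := by
    ext i j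
    simp [hXdef, hφdef, RingHom.mapMatrix_apply, Matrix.map_apply]
  have hminor : ∀ i j, φ (minor1 X i j) = minor1 M i j := by
    intro i j
    rw [minor1, minor1, RingHom.map_det]
    congr 1
    rw [← hmapX]
    rfl
  have hdet2 : φ ((X.submatrix (del2 i₁ i₂ hi) (del2 j₁ j₂ hj)).det)
      = (M.submatrix (del2 i₁ i₂ hi) (del2 j₁ j₂ hj)).det := by
    rw [RingHom.map_det]
    congr 1
    rw [← hmapX]
    rfl
  have hdet : φ X.det = M.det := by rw [RingHom.map_det, hmapX]
  have hfin := congrArg φ hgen2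
  rw [map_sub, _root_.map_mul, _root_.map_mul, _root_.map_mul, hminor, hminor, hminor, hminor, hdet2, hdet] at hfin
  exact hfin
end

section
/- Let T⁰, T¹, T² : ℤ² → ℂ be nowhere zero functions satisfying the bilinear relations Tᵃ(l+1,l̄)Tᵃ(l,l̄+1) − Tᵃ(l,l̄)Tᵃ(l+1,l̄+1) = ν⁻¹·T^{a-1}(l+1,l̄)·T^{a+1}(l,l̄+1) for a = 0,1,2, with the convention T⁻¹ = T³ = 0 (so for a = 0 and a = 2 the right side is 0). Then S_L^{l,l̄} := (T¹(l+1,l̄)T¹(l,l̄+1))/(T⁰(l+1,l̄)T²(l,l̄+1)) satisfies the discrete Liouville equation S_L^{l,l̄}·S_L^{l+1,l̄+1} = (ν⁻¹ − S_L^{l,l̄+1})·(ν⁻¹ − S_L^{l+1,l̄}). -/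
/-- The discrete Liouville equation (eq. (R27)) follows from the bilinear relations for
`T⁰, T¹, T²` with the convention `T⁻¹ = T³ = 0`. -/
theorem discrete_liouville
    (T0 T1 T2 : ℤ → ℤ → ℂ)
    (h0 : ∀ l lb : ℤ, T0 l lb ≠ 0)
    (h1 : ∀ l lb : ℤ, T1 l lb ≠ 0)
    (h2 : ∀ l lb : ℤ, T2 l lb ≠ 0)
    (ν : ℂ) (hν : ν ≠ 0)
    (heq0 : ∀ l lb : ℤ,
      T0 (l + 1) lb * T0 l (lb + 1) - T0 l lb * T0 (l + 1) (lb + 1) = 0)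
    (heq1 : ∀ l lb : ℤ,
      T1 (l + 1) lb * T1 l (lb + 1) - T1 l lb * T1 (l + 1) (lb + 1) =
        ν⁻¹ * (T0 (l + 1) lb * T2 l (lb + 1)))
    (heq2 : ∀ l lb : ℤ,
      T2 (l + 1) lb * T2 l (lb + 1) - T2 l lb * T2 (l + 1) (lb + 1) = 0)
    (SL : ℤ → ℤ → ℂ)
    (hSL : ∀ l lb : ℤ,
      SL l lb = (T1 (l + 1) lb * T1 l (lb + 1)) / (T0 (l + 1) lb * T2 l (lb + 1))) :
    ∀ l lb : ℤ,
      SL l lb * SL (l + 1) (lb + 1) =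
        (ν⁻¹ - SL l (lb + 1)) * (ν⁻¹ - SL (l + 1) lb) := by
  have hsub : ∀ l lb : ℤ, ν⁻¹ - SL l lb =
      -(T1 l lb * T1 (l + 1) (lb + 1)) / (T0 (l + 1) lb * T2 l (lb + 1)) := by
    intro l lb
    rw [hSL]
    rw [eq_div_iff (mul_ne_zero (h0 _ _) (h2 _ _)), sub_mul,
      div_mul_cancel₀ _ (mul_ne_zero (h0 _ _) (h2 _ _))]
    linear_combination -(heq1 l lb)
  intro l lb
  rw [hSL l lb, hSL (l+1) (lb+1), hsub, hsub]
  rw [div_mul_div_comm, div_mul_div_comm,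
    div_eq_div_iff (mul_ne_zero (mul_ne_zero (h0 _ _) (h2 _ _)) (mul_ne_zero (h0 _ _) (h2 _ _)))
      (mul_ne_zero (mul_ne_zero (h0 _ _) (h2 _ _)) (mul_ne_zero (h0 _ _) (h2 _ _)))]
  linear_combination (T1 (l+1) lb * T1 l (lb+1) * T1 (l+1+1) (lb+1) * T1 (l+1) (lb+1+1)) *
    (T2 l (lb+1+1) * T2 (l+1) (lb+1) * heq0 (l+1) lb +
     T0 (l+1) lb * T0 (l+1+1) (lb+1) * heq2 l (lb+1))
end
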